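/- arXiv:1403.1228 — 2 statements merged into one kernel-verified Lean document; each statement's English description precedes it below -/
import Mathlib

section
/- Let u0,u1,u2,u3 be four nodes of a connected graph such that u3 lies on a shortest path between u1 and u2 with d(u1,u3) = ⌈(d(u1,u2)+d(u0,u1)−d(u0,u2))/2⌉. Then ⌈(d(u0,u1)+d(u0,u2)+d(u1,u2))/2⌉ ≤ d(u0,u3)+d(u1,u2) ≤ ⌈(d(u0,u1)+d(u0,u2)+d(u1,u2))/2⌉ + 2·δ(u0,u1,u2,u3). -/
/-! Write `s₁ = d(u0,u1) + d(u2,u3)`, `s₂ = d(u0,u2) + d(u1,u3)`, `s₃ = d(u0,u3) + d(u1,u2)`.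
Shifting the integer `d(u0,u2)` out of the ceiling shows that the choice of `u3` makes
`⌈(d(u0,u1) + d(u0,u2) + d(u1,u2)) / 2⌉ = s₂`, and the same choice gives `s₁ ≤ s₂`.
Since `u3` is on a geodesic from `u1` to `u2`, the triangle inequality through `u3` gives
`s₂ ≤ s₃`. Hence `s₃` is the largest and `s₂` the middle sum, so `s₃ = s₂ + 2δ`. -/

open SimpleGraph

variable {V : Type*}

noncomputable def hyp4 (G : SimpleGraph V) (a b c d : V) : ℝ :=
  let s1 : ℝ := G.dist a b + G.dist c d
  let s2 : ℝ := G.dist a c + G.dist b d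
  let s3 : ℝ := G.dist a d + G.dist b c
  let L : ℝ := max s1 (max s2 s3)
  let S : ℝ := min s1 (min s2 s3)
  (L - (s1 + s2 + s3 - L - S)) / 2

noncomputable def deltaWorst (G : SimpleGraph V) [Fintype V] : ℝ :=
  ⨆ q : V × V × V × V, hyp4 G q.1 q.2.1 q.2.2.1 q.2.2.2

namespace SimpleGraph

theorem hyp4_eq_of_le {G : SimpleGraph V} {a b c d : V}
    (h12 : G.dist a b + G.dist c d ≤ G.dist a c + G.dist b d)
    (h23 : G.dist a c + G.dist b d ≤ G.dist a d + G.dist b c) :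
    hyp4 G a b c d =
      ((G.dist a d + G.dist b c : ℝ) - (G.dist a c + G.dist b d)) / 2 := by
  have h12' : (G.dist a b + G.dist c d : ℝ) ≤ G.dist a c + G.dist b d := by exact_mod_cast h12
  have h23' : (G.dist a c + G.dist b d : ℝ) ≤ G.dist a d + G.dist b c := by exact_mod_cast h23
  simp only [hyp4]
  rw [max_eq_right h23', max_eq_right (h12'.trans h23'), min_eq_left h23', min_eq_left h12']
  ring

theorem Connected.dist_add_dist_le_of_dist_add_dist_eq {G : SimpleGraph V} (hG : G.Connected)
    {u0 u1 u2 u3 : V} (hon : G.dist u1 u3 + G.dist u3 u2 = G.dist u1 u2) :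
    G.dist u0 u2 + G.dist u1 u3 ≤ G.dist u0 u3 + G.dist u1 u2 := by
  have := hG.dist_triangle (u := u0) (v := u3) (w := u2)
  omega

end SimpleGraph

theorem Nat.ceil_half_add_add_eq {a b c x : ℕ} (hx : (x : ℤ) = ⌈((c : ℚ) + a - b) / 2⌉) :
    ⌈((a : ℚ) + b + c) / 2⌉ = b + x := by
  rw [show ((a : ℚ) + b + c) / 2 = ((c : ℚ) + a - b) / 2 + ((b : ℕ) : ℤ) by push_cast; ring,
    Int.ceil_add_intCast, ← hx]
  ring

theorem Nat.add_le_add_two_mul_of_eq_ceil {a b c x : ℕ}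
    (hx : (x : ℤ) = ⌈((c : ℚ) + a - b) / 2⌉) : c + a ≤ b + 2 * x := by
  have hle := Int.le_ceil (((c : ℚ) + a - b) / 2)
  rw [← hx] at hle
  push_cast at hle
  exact_mod_cast (by push_cast; linarith : ((c + a : ℕ) : ℚ) ≤ (b + 2 * x : ℕ))

theorem stmt3 (G : SimpleGraph V) (hG : G.Connected) (u0 u1 u2 u3 : V)
    (hon : G.dist u1 u3 + G.dist u3 u2 = G.dist u1 u2)
    (hmid : (G.dist u1 u3 : ℤ) =
      ⌈((G.dist u1 u2 : ℚ) + G.dist u0 u1 - G.dist u0 u2) / 2⌉) :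
    ((⌈((G.dist u0 u1 : ℚ) + G.dist u0 u2 + G.dist u1 u2) / 2⌉ : ℝ) ≤
        G.dist u0 u3 + G.dist u1 u2) ∧
    ((G.dist u0 u3 + G.dist u1 u2 : ℝ) ≤
        (⌈((G.dist u0 u1 : ℚ) + G.dist u0 u2 + G.dist u1 u2) / 2⌉ : ℝ) +
          2 * hyp4 G u0 u1 u2 u3) := by
  have h12 : G.dist u0 u1 + G.dist u2 u3 ≤ G.dist u0 u2 + G.dist u1 u3 := by
    have := Nat.add_le_add_two_mul_of_eq_ceil hmid
    rw [G.dist_comm (u := u2)]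
    omega
  have h23 := hG.dist_add_dist_le_of_dist_add_dist_eq (u0 := u0) hon
  have h23' : (G.dist u0 u2 + G.dist u1 u3 : ℝ) ≤ G.dist u0 u3 + G.dist u1 u2 := by
    exact_mod_cast h23
  have hceil : (⌈((G.dist u0 u1 : ℚ) + G.dist u0 u2 + G.dist u1 u2) / 2⌉ : ℝ) =
      G.dist u0 u2 + G.dist u1 u3 := by
    rw [Nat.ceil_half_add_add_eq hmid]
    norm_cast
  rw [hceil, hyp4_eq_of_le h12 h23]
  constructor <;> linarith
end

section
/- Let Δ be a shortest-path triangle on distinct nodes u0,u1,u2 of a connected graph with d(u0,u1)+d(u1,u2)+d(u0,u2) even, and let u_{01}, u_{02}, u_{12} be Gromov product nodes on the sides. Then d(u_{01}, u_{12}) ≤ 6·δ_worst(G) + 1. -/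
/-!
Write `δ` for `deltaWorst G` and `p = d(u0,u01)`, `q = d(u2,u12)`, so that `p + q = d(u0,u2)`
and `u01`, `u12` are the tripod points of the triangle. The four-point condition applied to
`(u12, u0; u1, u2)`, whose two competing sums coincide, gives `d(u0,u12) ≤ p + 2δ`; symmetrically
`d(u2,u01) ≤ q + 2δ`. Applied once more to `(u01, u12; u0, u2)` it yields
`d(u01,u12) + d(u0,u2) ≤ max (p + q) (d(u0,u12) + d(u2,u01)) + 2δ ≤ d(u0,u2) + 6δ`.
-/

open SimpleGraph

variable {V : Type*}

namespace SimpleGraph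

variable (G : SimpleGraph V)

theorem dist_add_dist_le_max_add_two_mul_hyp4 (a b c e : V) :
    (G.dist a b + G.dist c e : ℝ) ≤
      max (G.dist a c + G.dist b e : ℝ) (G.dist a e + G.dist b c) + 2 * hyp4 G a b c e := by
  unfold hyp4
  set x : ℝ := G.dist a b + G.dist c e
  set y : ℝ := G.dist a c + G.dist b e
  set z : ℝ := G.dist a e + G.dist b c
  have hyz : min y z + max y z = y + z := min_add_max y z
  rcases le_total x (min y z) with h | h
  · have := min_eq_left h
    have := le_max_right x (max y z)
    have := min_le_max (a := y) (b := z)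
    linarith
  · have := min_eq_right h
    have := le_max_left x (max y z)
    linarith

variable [Fintype V]

theorem hyp4_le_deltaWorst (a b c e : V) : hyp4 G a b c e ≤ deltaWorst G :=
  le_ciSup (f := fun q : V × V × V × V => hyp4 G q.1 q.2.1 q.2.2.1 q.2.2.2)
    (Set.finite_range _).bddAbove ⟨a, b, c, e⟩

theorem deltaWorst_nonneg (v : V) : 0 ≤ deltaWorst G := by
  simpa [hyp4] using G.hyp4_le_deltaWorst v v v v

theorem dist_add_dist_le_max_add_two_mul_deltaWorst (a b c e : V) :
    (G.dist a b + G.dist c e : ℝ) ≤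
      max (G.dist a c + G.dist b e : ℝ) (G.dist a e + G.dist b c) + 2 * deltaWorst G := by
  have := G.hyp4_le_deltaWorst a b c e
  have := G.dist_add_dist_le_max_add_two_mul_hyp4 a b c e
  linarith

theorem dist_add_dist_le_of_add_eq_add {a b c e : V}
    (h : (G.dist a c + G.dist b e : ℝ) = G.dist a e + G.dist b c) :
    (G.dist a b + G.dist c e : ℝ) ≤ G.dist a c + G.dist b e + 2 * deltaWorst G := by
  simpa [← h] using G.dist_add_dist_le_max_add_two_mul_deltaWorst a b c e

end SimpleGraph

theorem stmt6_general [Fintype V] (G : SimpleGraph V)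
    (u0 u1 u2 u01 u12 : V)
    (h01on : G.dist u0 u01 + G.dist u01 u1 = G.dist u0 u1)
    (h01g : 2 * G.dist u0 u01 + G.dist u1 u2 = G.dist u0 u1 + G.dist u0 u2)
    (h12on : G.dist u1 u12 + G.dist u12 u2 = G.dist u1 u2)
    (h12g : G.dist u1 u12 = G.dist u1 u01) :
    (G.dist u01 u12 : ℝ) ≤ 6 * deltaWorst G + 1 := by
  have hd (x y : V) : (G.dist x y : ℝ) = G.dist y x := by rw [G.dist_comm]
  have h01on' : (G.dist u0 u01 + G.dist u01 u1 : ℝ) = G.dist u0 u1 := by exact_mod_cast h01on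
  have h01g' : (2 * G.dist u0 u01 + G.dist u1 u2 : ℝ) = G.dist u0 u1 + G.dist u0 u2 := by
    exact_mod_cast h01g
  have h12on' : (G.dist u1 u12 + G.dist u12 u2 : ℝ) = G.dist u1 u2 := by exact_mod_cast h12on
  have h12g' : (G.dist u1 u12 : ℝ) = G.dist u1 u01 := by exact_mod_cast h12g
  have hA := G.dist_add_dist_le_of_add_eq_add (a := u12) (b := u0) (c := u1) (e := u2)
    (by linarith [hd u12 u1, hd u12 u2, hd u1 u01])
  have hB := G.dist_add_dist_le_of_add_eq_add (a := u01) (b := u2) (c := u1) (e := u0)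
    (by linarith [hd u01 u1, hd u01 u0, hd u2 u1, hd u2 u0])
  have hC := G.dist_add_dist_le_max_add_two_mul_deltaWorst u01 u12 u0 u2
  have hδ := G.deltaWorst_nonneg u0
  have hmax : max (G.dist u01 u0 + G.dist u12 u2 : ℝ) (G.dist u01 u2 + G.dist u12 u0) ≤
      G.dist u0 u2 + 4 * deltaWorst G :=
    max_le (by linarith [hd u01 u0, hd u12 u1, hd u01 u1])
      (by linarith [hd u12 u0, hd u1 u0, hd u2 u0, hd u12 u1, hd u01 u1])
  linarith

theorem stmt6 [Fintype V] (G : SimpleGraph V) (hG : G.Connected)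
    (u0 u1 u2 u01 u02 u12 : V)
    (hne01 : u0 ≠ u1) (hne02 : u0 ≠ u2) (hne12 : u1 ≠ u2)
    (heven : Even (G.dist u0 u1 + G.dist u1 u2 + G.dist u0 u2))
    (h01on : G.dist u0 u01 + G.dist u01 u1 = G.dist u0 u1)
    (h01g : 2 * G.dist u0 u01 + G.dist u1 u2 = G.dist u0 u1 + G.dist u0 u2)
    (h02on : G.dist u0 u02 + G.dist u02 u2 = G.dist u0 u2)
    (h02g : 2 * G.dist u0 u02 + G.dist u1 u2 = G.dist u0 u1 + G.dist u0 u2)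
    (h12on : G.dist u1 u12 + G.dist u12 u2 = G.dist u1 u2)
    (h12g : G.dist u1 u12 = G.dist u1 u01) :
    (G.dist u01 u12 : ℝ) ≤ 6 * deltaWorst G + 1 :=
  stmt6_general G u0 u1 u2 u01 u12 h01on h01g h12on h12g
end
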